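/- arXiv:1911.01031 — 7 statements merged into one kernel-verified Lean document; each statement's English description precedes it below -/
import Mathlib

section
/- Any two sets in a non-trivial d-wise intersecting family F ⊆ C([n],k) intersect in at least d-1 elements; i.e., for all A, B ∈ F, |A ∩ B| ≥ d-1. -/
open Finset

/-- A family is `d`-wise intersecting if any at most `d` distinct members have
nonempty common intersection. -/
def DWiseIntersecting (d : ℕ) (F : Finset (Finset ℕ)) : Prop :=
  ∀ (G : Finset (Finset ℕ)), G ⊆ F → ∀ (hne : G.Nonempty), G.card ≤ d →
    (G.inf' hne id).Nonempty

/-- A family is non-trivial if the common intersection of all its members is empty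
(in particular the family is nonempty). -/
def NonTrivialFam (F : Finset (Finset ℕ)) : Prop := ∀ x : ℕ, ∃ A ∈ F, x ∉ A

/-- `F` contains a Delta system with `s` edges and core `X`. -/
def HasDeltaSystem (F : Finset (Finset ℕ)) (X : Finset ℕ) (s : ℕ) : Prop :=
  ∃ Δ ⊆ F, Δ.card = s ∧ ∀ e ∈ Δ, ∀ f ∈ Δ, e ≠ f → e ∩ f = X

theorem pairwise_intersection_lower_bound (n k d : ℕ)
    (F : Finset (Finset ℕ)) (hF : F ⊆ (Finset.Icc 1 n).powersetCard k)
    (hdw : DWiseIntersecting d F) (hnt : NonTrivialFam F)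
    (A B : Finset ℕ) (hA : A ∈ F) (hB : B ∈ F) :
    d - 1 ≤ (A ∩ B).card := by
  by_contra h
  push_neg at h
  choose f hfF hfx using hnt
  set G := insert A (insert B ((A ∩ B).image f)) with hG
  have hGsub : G ⊆ F := by
    intro e he
    simp only [hG, mem_insert, mem_image] at he
    rcases he with rfl | rfl | ⟨x, hx, rfl⟩
    · exact hA
    · exact hB
    · exact hfF x
  have hGne : G.Nonempty := ⟨A, by simp [hG]⟩
  have hcard : G.card ≤ d := by
    have h1 := card_insert_le A (insert B ((A ∩ B).image f))
    have h2 := card_insert_le B ((A ∩ B).image f)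
    have h3 := card_image_le (s := A ∩ B) (f := f)
    rw [← hG] at h1
    omega
  obtain ⟨y, hy⟩ := hdw G hGsub hGne hcard
  have hymem : ∀ e ∈ G, y ∈ e := fun e he => inf'_le id he hy
  have hyAB : y ∈ A ∩ B := by
    rw [mem_inter]
    exact ⟨hymem A (by simp [hG]), hymem B (by simp [hG])⟩
  have : y ∈ f y := hymem (f y) (by simp [hG]; exact Or.inr (Or.inr ⟨y, mem_inter.mp hyAB, rfl⟩))
  exact hfx y this
end

section
/- If n ≥ k+1 and F ⊆ C([n],k) is a non-trivial k-wise intersecting family, then F is isomorphic to the complete k-uniform hypergraph on k+1 vertices; that is, there exists a (k+1)-element set S ⊆ [n] with F = C(S,k). -/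
open Finset

lemma mem_inf'_iff_aux (G : Finset (Finset ℕ)) (h : G.Nonempty) (x : ℕ) :
    x ∈ G.inf' h id ↔ ∀ A ∈ G, x ∈ A := by
  simp only [← Finset.singleton_subset_iff, ← Finset.le_iff_subset, Finset.le_inf'_iff, id]

lemma descent_aux {k : ℕ} {F : Finset (Finset ℕ)} (hdw : DWiseIntersecting k F)
    (hnt : NonTrivialFam F) :
    ∀ c : ℕ, 1 ≤ c → ∀ G : Finset (Finset ℕ), G ⊆ F → ∀ hne : G.Nonempty,
      (G.inf' hne id).card = c → G.card + c ≤ k + 1 →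
      ∃ G' : Finset (Finset ℕ), ∃ _ : G' ⊆ F, ∃ hne' : G'.Nonempty,
        G'.card + 1 ≤ k + 1 ∧ (G'.inf' hne' id).card = 1 := by
  intro c
  induction c using Nat.strong_induction_on with
  | _ c ih =>
    intro hc1 G hGF hne hcard hsum
    rcases eq_or_lt_of_le hc1 with h1 | h2
    · exact ⟨G, hGF, hne, by omega, hcard.trans h1.symm⟩
    · -- c ≥ 2
      have hIne : (G.inf' hne id).Nonempty := by
        rw [← Finset.card_pos, hcard]; omega
      obtain ⟨x, hx⟩ := hIne
      have hxall : ∀ A ∈ G, x ∈ A := (mem_inf'_iff_aux G hne x).1 hx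
      obtain ⟨B, hBF, hxB⟩ := hnt x
      have hBG : B ∉ G := fun h => hxB (hxall B h)
      set G' := insert B G with hG'
      have hG'F : G' ⊆ F := Finset.insert_subset hBF hGF
      have hG'ne : G'.Nonempty := Finset.insert_nonempty _ _
      have hG'card : G'.card = G.card + 1 := Finset.card_insert_of_notMem hBG
      have hG'k : G'.card ≤ k := by omega
      have hI'ne : (G'.inf' hG'ne id).Nonempty := hdw G' hG'F hG'ne hG'k
      have hsub : G'.inf' hG'ne id ⊆ (G.inf' hne id).erase x := by
        intro z hz
        have hzall : ∀ A ∈ G', z ∈ A := (mem_inf'_iff_aux G' hG'ne z).1 hz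
        rw [Finset.mem_erase]
        constructor
        · rintro rfl; exact hxB (hzall B (Finset.mem_insert_self _ _))
        · exact (mem_inf'_iff_aux G hne z).2 fun A hA =>
            hzall A (Finset.mem_insert_of_mem hA)
      have hle : (G'.inf' hG'ne id).card ≤ c - 1 := by
        calc (G'.inf' hG'ne id).card ≤ ((G.inf' hne id).erase x).card :=
              Finset.card_le_card hsub
          _ = c - 1 := by rw [Finset.card_erase_of_mem hx, hcard]
      have hc'1 : 1 ≤ (G'.inf' hG'ne id).card := Finset.card_pos.2 hI'ne
      exact ih _ (by omega) hc'1 G' hG'F hG'ne rfl (by omega)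

theorem kwise_nontrivial_is_complete (n k : ℕ) (hk : 2 ≤ k) (hn : k + 1 ≤ n)
    (F : Finset (Finset ℕ)) (hF : F ⊆ (Finset.Icc 1 n).powersetCard k)
    (hdw : DWiseIntersecting k F) (hnt : NonTrivialFam F) :
    ∃ S ⊆ Finset.Icc 1 n, S.card = k + 1 ∧ F = S.powersetCard k := by
  -- every member of F has card k and is ⊆ Icc 1 n
  have hmem : ∀ A ∈ F, A ⊆ Finset.Icc 1 n ∧ A.card = k := by
    intro A hA
    have := hF hA
    rw [Finset.mem_powersetCard] at this
    exact this
  obtain ⟨A₀, hA₀F, -⟩ := hnt 0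
  -- initial family {A₀}
  have hsing : ({A₀} : Finset (Finset ℕ)).Nonempty := Finset.singleton_nonempty _
  have hinfs : ({A₀} : Finset (Finset ℕ)).inf' hsing id = A₀ := by simp
  obtain ⟨G, hGF, hGne, hGk, hG1⟩ := descent_aux hdw hnt k (by omega) {A₀}
    (Finset.singleton_subset_iff.2 hA₀F) hsing
    (by rw [hinfs]; exact (hmem A₀ hA₀F).2)
    (by rw [Finset.card_singleton]; omega)
  obtain ⟨x, hxeq⟩ := Finset.card_eq_one.1 hG1
  have hxall : ∀ A ∈ G, x ∈ A := by
    intro A hA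
    exact (mem_inf'_iff_aux G hGne x).1 (by rw [hxeq]; exact Finset.mem_singleton_self x) A hA
  obtain ⟨B, hBF, hxB⟩ := hnt x
  have hBG : B ∉ G := fun h => hxB (hxall B h)
  set H := insert B G with hH
  have hHF : H ⊆ F := Finset.insert_subset hBF hGF
  have hHcard' : H.card = G.card + 1 := Finset.card_insert_of_notMem hBG
  -- H has empty common intersection
  have hHempty : ∀ z : ℕ, ¬ (∀ A ∈ H, z ∈ A) := by
    intro z hz
    have hzG : z ∈ G.inf' hGne id :=
      (mem_inf'_iff_aux G hGne z).2 fun A hA => hz A (Finset.mem_insert_of_mem hA)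
    rw [hxeq, Finset.mem_singleton] at hzG
    exact hxB (hzG ▸ hz B (Finset.mem_insert_self _ _))
  -- H.card = k + 1
  have hHk : H.card = k + 1 := by
    by_contra hne'
    have hHle : H.card ≤ k := by omega
    have hHne : H.Nonempty := Finset.insert_nonempty _ _
    obtain ⟨z, hz⟩ := hdw H hHF hHne hHle
    exact hHempty z ((mem_inf'_iff_aux H hHne z).1 hz)
  -- choose y e ∈ ⋂ (H \ {e})
  have hychoice : ∀ e : Finset ℕ, ∃ z : ℕ, e ∈ H → ∀ A ∈ H, A ≠ e → z ∈ A := by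
    intro e
    by_cases he : e ∈ H
    · have herase : H.erase e ⊆ F := (Finset.erase_subset e H).trans hHF
      have hcarde : (H.erase e).card = k := by rw [Finset.card_erase_of_mem he, hHk]; omega
      have hne2 : (H.erase e).Nonempty := by rw [← Finset.card_pos, hcarde]; omega
      obtain ⟨z, hz⟩ := hdw _ herase hne2 (le_of_eq hcarde)
      refine ⟨z, fun _ A hA hAe => ?_⟩
      exact (mem_inf'_iff_aux _ hne2 z).1 hz A (Finset.mem_erase.2 ⟨hAe, hA⟩)
    · exact ⟨0, fun h => absurd h he⟩
  choose y hy using hychoice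
  have hynotmem : ∀ e ∈ H, y e ∉ e := by
    intro e he hye
    exact hHempty (y e) fun A hA => by
      by_cases hAe : A = e
      · rw [hAe]; exact hye
      · exact hy e he A hA hAe
  have hyinj : Set.InjOn y ↑H := by
    intro e he f hf hef
    by_contra hne'
    exact hynotmem f hf (hef ▸ hy e he f hf (Ne.symm hne'))
  set S := H.image y with hS
  have hScard : S.card = k + 1 := by rw [Finset.card_image_of_injOn hyinj, hHk]
  -- each e ∈ H equals S.erase (y e)
  have hedge : ∀ e ∈ H, e = S.erase (y e) := by
    intro e he
    have hsub1 : (H.erase e).image y ⊆ e := by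
      intro z hz
      obtain ⟨g, hg, rfl⟩ := Finset.mem_image.1 hz
      obtain ⟨hge, hgH⟩ := Finset.mem_erase.1 hg
      exact hy g hgH e he (Ne.symm hge)
    have hcard1 : ((H.erase e).image y).card = k := by
      rw [Finset.card_image_of_injOn (hyinj.mono (by simp [Finset.erase_subset]))]
      rw [Finset.card_erase_of_mem he, hHk]; omega
    have hek : e.card = k := (hmem e (hHF he)).2
    have heq1 : (H.erase e).image y = e :=
      Finset.eq_of_subset_of_card_le hsub1 (by omega)
    have hsub2 : e ⊆ S.erase (y e) := by
      intro z hz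
      rw [← heq1] at hz
      obtain ⟨g, hg, rfl⟩ := Finset.mem_image.1 hz
      obtain ⟨hge, hgH⟩ := Finset.mem_erase.1 hg
      refine Finset.mem_erase.2 ⟨fun h => hge (hyinj hgH he h), Finset.mem_image_of_mem y hgH⟩
    have hyeS : y e ∈ S := Finset.mem_image_of_mem y he
    have : (S.erase (y e)).card = k := by rw [Finset.card_erase_of_mem hyeS, hScard]; omega
    exact Finset.eq_of_subset_of_card_le hsub2 (by omega)
  have hyeS : ∀ e ∈ H, y e ∈ S := fun e he => Finset.mem_image_of_mem y he
  -- S ⊆ Icc 1 n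
  have hSIcc : S ⊆ Finset.Icc 1 n := by
    intro z hz
    obtain ⟨g, hg, rfl⟩ := Finset.mem_image.1 hz
    -- y g ∈ some other member of H
    have : ∃ f ∈ H, f ≠ g := by
      by_contra hcon
      push_neg at hcon
      have : H.card ≤ 1 := Finset.card_le_one.2 fun a ha b hb => (hcon a ha).trans (hcon b hb).symm
      omega
    obtain ⟨f, hf, hfg⟩ := this
    exact (hmem f (hHF hf)).1 (hy g hg f hf hfg)
  refine ⟨S, hSIcc, hScard, ?_⟩
  apply Finset.Subset.antisymm
  · -- F ⊆ powersetCard k S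
    intro C hC
    have hCk : C.card = k := (hmem C hC).2
    rw [Finset.mem_powersetCard]
    refine ⟨?_, hCk⟩
    -- for any distinct e f ∈ H, y e ∈ C or y f ∈ C
    have hpair : ∀ e ∈ H, ∀ f ∈ H, e ≠ f → y e ∈ C ∨ y f ∈ C := by
      intro e he f hf hef
      set D := insert C ((H.erase e).erase f) with hD
      have hDF : D ⊆ F := Finset.insert_subset hC
        (((Finset.erase_subset f _).trans (Finset.erase_subset e H)).trans hHF)
      have heecard : ((H.erase e).erase f).card = k - 1 := by
        rw [Finset.card_erase_of_mem (Finset.mem_erase.2 ⟨Ne.symm hef, hf⟩),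
          Finset.card_erase_of_mem he, hHk]
        omega
      have hDcard : D.card ≤ k := by
        calc D.card ≤ ((H.erase e).erase f).card + 1 := Finset.card_insert_le _ _
          _ ≤ k := by omega
      have hDne : D.Nonempty := Finset.insert_nonempty _ _
      obtain ⟨z, hz⟩ := hdw D hDF hDne hDcard
      have hzall : ∀ A ∈ D, z ∈ A := (mem_inf'_iff_aux D hDne z).1 hz
      have hzC : z ∈ C := hzall C (Finset.mem_insert_self _ _)
      have hzH : ∀ A ∈ H, A ≠ e → A ≠ f → z ∈ A := fun A hA h1 h2 =>
        hzall A (Finset.mem_insert_of_mem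
          (Finset.mem_erase.2 ⟨h2, Finset.mem_erase.2 ⟨h1, hA⟩⟩))
      -- z ∈ S
      have hzS : z ∈ S := by
        have hnee : ((H.erase e).erase f).Nonempty := by
          rw [← Finset.card_pos, heecard]; omega
        obtain ⟨g, hg⟩ := hnee
        have hgf : g ≠ f := (Finset.mem_erase.1 hg).1
        have hge : g ≠ e := (Finset.mem_erase.1 (Finset.mem_erase.1 hg).2).1
        have hgH : g ∈ H := (Finset.mem_erase.1 (Finset.mem_erase.1 hg).2).2
        have hzg : z ∈ g := hzH g hgH hge hgf
        have := hedge g hgH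
        rw [this] at hzg
        exact Finset.mem_of_mem_erase hzg
      obtain ⟨g, hgH, hgz⟩ := Finset.mem_image.1 hzS
      by_cases hge : g = e
      · left; rw [← hge, hgz]; exact hzC
      by_cases hgf : g = f
      · right; rw [← hgf, hgz]; exact hzC
      · exfalso
        have : z ∈ g := hzH g hgH hge hgf
        rw [← hgz] at this
        exact hynotmem g hgH this
    -- bad elements of H
    have hbad : (H.filter (fun g => y g ∉ C)).card ≤ 1 := by
      refine Finset.card_le_one.2 fun a ha b hb => ?_
      obtain ⟨haH, haC⟩ := Finset.mem_filter.1 ha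
      obtain ⟨hbH, hbC⟩ := Finset.mem_filter.1 hb
      by_contra hab
      rcases hpair a haH b hbH hab with h | h
      · exact haC h
      · exact hbC h
    have hsdiff : S \ C ⊆ (H.filter (fun g => y g ∉ C)).image y := by
      intro z hz
      obtain ⟨hzS, hzC⟩ := Finset.mem_sdiff.1 hz
      obtain ⟨g, hgH, rfl⟩ := Finset.mem_image.1 hzS
      exact Finset.mem_image_of_mem y (Finset.mem_filter.2 ⟨hgH, hzC⟩)
    have hsd1 : (S \ C).card ≤ 1 :=
      le_trans (Finset.card_le_card hsdiff) (le_trans (Finset.card_image_le) hbad)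
    have hinter : (S ∩ C).card ≥ k := by
      have := Finset.card_sdiff_add_card_inter S C
      omega
    have : S ∩ C = C :=
      Finset.eq_of_subset_of_card_le Finset.inter_subset_right (by omega)
    rw [← this]
    exact Finset.inter_subset_left
  · -- powersetCard k S ⊆ F
    intro C hC
    rw [Finset.mem_powersetCard] at hC
    obtain ⟨hCS, hCk⟩ := hC
    have hsd : (S \ C).card = 1 := by
      have := Finset.card_sdiff_of_subset hCS
      omega
    obtain ⟨z, hzeq⟩ := Finset.card_eq_one.1 hsd
    have hzS : z ∈ S \ C := hzeq ▸ Finset.mem_singleton_self z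
    obtain ⟨hzS', hzC⟩ := Finset.mem_sdiff.1 hzS
    obtain ⟨g, hgH, rfl⟩ := Finset.mem_image.1 hzS'
    have hCsub : C ⊆ S.erase (y g) := fun w hw =>
      Finset.mem_erase.2 ⟨fun h => hzC (h ▸ hw), hCS hw⟩
    have : (S.erase (y g)).card = k := by
      rw [Finset.card_erase_of_mem hzS', hScard]; omega
    have hCeq : C = S.erase (y g) :=
      Finset.eq_of_subset_of_card_le hCsub (by omega)
    rw [hCeq, ← hedge g hgH]
    exact hHF hgH
end

section
/- Let 2 ≤ d ≤ k and let S ⊆ C([k+1],d) be a family of d-element subsets of [k+1] such that any two distinct members intersect in at least d-1 elements ((d-1)-intersecting). Then S is isomorphic (under a permutation of [k+1]) to a subfamily of either K^{(d)}_{d+1} (all d-subsets of some (d+1)-set) or the family {D ∈ C([k+1],d) : [d-1] ⊆ D}. -/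
open Finset

theorem structure_of_intersecting_d_sets (k d : ℕ) (hd : 2 ≤ d) (hdk : d ≤ k)
    (S : Finset (Finset ℕ)) (hS : S ⊆ (Finset.Icc 1 (k + 1)).powersetCard d)
    (hint : ∀ A ∈ S, ∀ B ∈ S, A ≠ B → d - 1 ≤ (A ∩ B).card) :
    (∃ T ⊆ Finset.Icc 1 (k + 1), T.card = d + 1 ∧ ∀ A ∈ S, A ⊆ T) ∨
    (∃ X ⊆ Finset.Icc 1 (k + 1), X.card = d - 1 ∧ ∀ A ∈ S, X ⊆ A) := by
  have hIcc : (Finset.Icc 1 (k + 1)).card = k + 1 := by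
    rw [Nat.card_Icc]
    omega
  have hmem : ∀ A ∈ S, A ⊆ Finset.Icc 1 (k + 1) ∧ A.card = d := by
    intro A hA
    exact Finset.mem_powersetCard.mp (hS hA)
  by_cases hpair : ∃ A ∈ S, ∃ B ∈ S, A ≠ B
  · obtain ⟨A, hA, B, hB, hAB⟩ := hpair
    obtain ⟨hAsub, hAcard⟩ := hmem A hA
    obtain ⟨hBsub, hBcard⟩ := hmem B hB
    have hXcard : (A ∩ B).card = d - 1 := by
      have h1 := hint A hA B hB hAB
      have h2 : (A ∩ B).card < d := by
        by_contra h
        push_neg at h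
        have hXA : A ∩ B = A :=
          Finset.eq_of_subset_of_card_le Finset.inter_subset_left (by omega)
        have hXB : A ∩ B = B :=
          Finset.eq_of_subset_of_card_le Finset.inter_subset_right (by omega)
        exact hAB (hXA.symm.trans hXB)
      omega
    have hUcard : (A ∪ B).card = d + 1 := by
      have := Finset.card_union_add_card_inter A B
      omega
    -- key: a member missing a point of A ∩ B equals (A ∪ B) \ {x}
    have key : ∀ C ∈ S, ∀ x ∈ A ∩ B, x ∉ C → C = (A ∪ B) \ {x} := by
      intro C hC x hx hxC
      obtain ⟨hCsub, hCcard⟩ := hmem C hC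
      have hxA : x ∈ A := (Finset.mem_inter.mp hx).1
      have hxB : x ∈ B := (Finset.mem_inter.mp hx).2
      have hsub : ∀ E : Finset ℕ, E ∈ S → E.card = d → x ∈ E → E \ {x} ⊆ C := by
        intro E hE hEcard hxE
        have hne : C ≠ E := fun h => hxC (h ▸ hxE)
        have h1 := hint C hC E hE hne
        have h2 : (C ∩ E).card < d := by
          by_contra h
          push_neg at h
          have : C ∩ E = E :=
            Finset.eq_of_subset_of_card_le Finset.inter_subset_right (by omega)
          exact hxC (Finset.mem_inter.mp (this ▸ hxE)).1
        have hEC : (E \ C).card = 1 := by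
          have h3 := Finset.card_inter_add_card_sdiff E C
          rw [Finset.inter_comm] at h3
          omega
        obtain ⟨y, hy⟩ := Finset.card_eq_one.mp hEC
        have hxy : x = y := by
          have : x ∈ E \ C := Finset.mem_sdiff.mpr ⟨hxE, hxC⟩
          rw [hy] at this
          exact Finset.mem_singleton.mp this
        intro z hz
        obtain ⟨hzE, hzx⟩ := Finset.mem_sdiff.mp hz
        by_contra hzC
        have : z ∈ E \ C := Finset.mem_sdiff.mpr ⟨hzE, hzC⟩
        rw [hy] at this
        exact hzx (Finset.mem_singleton.mpr ((Finset.mem_singleton.mp this).trans hxy.symm))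
      have hAC : A \ {x} ⊆ C := hsub A hA hAcard hxA
      have hBC : B \ {x} ⊆ C := hsub B hB hBcard hxB
      have hUC : (A ∪ B) \ {x} ⊆ C := by
        intro z hz
        obtain ⟨hzU, hzx⟩ := Finset.mem_sdiff.mp hz
        rcases Finset.mem_union.mp hzU with h | h
        · exact hAC (Finset.mem_sdiff.mpr ⟨h, hzx⟩)
        · exact hBC (Finset.mem_sdiff.mpr ⟨h, hzx⟩)
      have hUcard' : ((A ∪ B) \ {x}).card = d := by
        rw [Finset.card_sdiff_of_subset (Finset.singleton_subset_iff.mpr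
          (Finset.mem_union_left B hxA))]
        simp [hUcard]
      exact (Finset.eq_of_subset_of_card_le hUC (by omega)).symm
    by_cases hall : ∀ C ∈ S, A ∩ B ⊆ C
    · right
      exact ⟨A ∩ B, Finset.inter_subset_left.trans hAsub, hXcard, hall⟩
    · left
      push_neg at hall
      obtain ⟨C, hC, hCX⟩ := hall
      obtain ⟨x, hx, hxC⟩ := Finset.not_subset.mp hCX
      refine ⟨A ∪ B, Finset.union_subset hAsub hBsub, hUcard, ?_⟩
      intro D hD
      obtain ⟨hDsub, hDcard⟩ := hmem D hD
      by_cases hXD : A ∩ B ⊆ D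
      · -- x ∈ D, x ∉ C so D ≠ C, and |D∩C| ≥ d-1 forces D ⊆ A∪B
        have hxD : x ∈ D := hXD hx
        have hne : D ≠ C := fun h => hxC (h ▸ hxD)
        have h1 := hint D hD C hC hne
        have hCeq := key C hC x hx hxC
        have hDCsub : D ∩ C ⊆ D ∩ (A ∪ B) := by
          intro z hz
          obtain ⟨hzD, hzC⟩ := Finset.mem_inter.mp hz
          refine Finset.mem_inter.mpr ⟨hzD, ?_⟩
          rw [hCeq] at hzC
          exact (Finset.mem_sdiff.mp hzC).1
        have hxnotDC : x ∉ D ∩ C := fun h => hxC (Finset.mem_inter.mp h).2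
        have hxin : x ∈ D ∩ (A ∪ B) :=
          Finset.mem_inter.mpr ⟨hxD, Finset.mem_union_left B (Finset.mem_inter.mp hx).1⟩
        have hbig : d ≤ (D ∩ (A ∪ B)).card := by
          have : insert x (D ∩ C) ⊆ D ∩ (A ∪ B) := by
            intro z hz
            rcases Finset.mem_insert.mp hz with h | h
            · exact h ▸ hxin
            · exact hDCsub h
          have h2 := Finset.card_le_card this
          rw [Finset.card_insert_of_notMem hxnotDC] at h2
          omega
        have : D ∩ (A ∪ B) = D :=
          Finset.eq_of_subset_of_card_le Finset.inter_subset_left (by omega)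
        rw [← this]
        exact Finset.inter_subset_right
      · obtain ⟨y, hy, hyD⟩ := Finset.not_subset.mp hXD
        rw [key D hD y hy hyD]
        exact Finset.sdiff_subset
  · push_neg at hpair
    left
    rcases S.eq_empty_or_nonempty with hSe | ⟨A, hA⟩
    · obtain ⟨T, hT, hTcard⟩ :=
        Finset.exists_subset_card_eq (show d + 1 ≤ (Finset.Icc 1 (k + 1)).card by omega)
      exact ⟨T, hT, hTcard, by simp [hSe]⟩
    · obtain ⟨hAsub, hAcard⟩ := hmem A hA
      obtain ⟨T, hAT, hT, hTcard⟩ :=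
        Finset.exists_subsuperset_card_eq (n := d + 1) hAsub (by omega) (by omega)
      exact ⟨T, hT, hTcard, fun D hD => (hpair D hD A hA) ▸ hAT⟩
end

section
/- The family H(k,d) = {A ∈ C([n],k) : [d-1] ⊆ A, A ∩ [d,k+1] ≠ ∅} ∪ {[k+1] \ {i} : i ∈ [d-1]} is a d-wise intersecting family with ⋂H(k,d) = ∅, provided n ≥ k+2 and 2 ≤ d < k. -/
open Finset

theorem H_family_is_dwise_nontrivial (n k d : ℕ) (hd : 2 ≤ d) (hdk : d < k)
    (hn : k + 2 ≤ n) :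
    DWiseIntersecting d
      ((((Finset.Icc 1 n).powersetCard k).filter
          (fun A => Finset.Icc 1 (d - 1) ⊆ A ∧ (A ∩ Finset.Icc d (k + 1)).Nonempty)) ∪
        (Finset.Icc 1 (d - 1)).image (fun i => (Finset.Icc 1 (k + 1)).erase i)) ∧
    NonTrivialFam
      ((((Finset.Icc 1 n).powersetCard k).filter
          (fun A => Finset.Icc 1 (d - 1) ⊆ A ∧ (A ∩ Finset.Icc d (k + 1)).Nonempty)) ∪
        (Finset.Icc 1 (d - 1)).image (fun i => (Finset.Icc 1 (k + 1)).erase i)) := by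
  constructor
  · -- d-wise intersecting
    intro G hG hne hcard
    suffices h : ∃ y, ∀ A ∈ G, y ∈ A by
      obtain ⟨y, hy⟩ := h
      have : ({y} : Finset ℕ) ≤ G.inf' hne id :=
        Finset.le_inf' _ _ (fun b hb => Finset.singleton_subset_iff.mpr (hy b hb))
      exact ⟨y, this (Finset.mem_singleton_self y)⟩
    by_cases hex : ∃ j ∈ Finset.Icc 1 (d-1), ∀ A ∈ G, j ∈ A
    · obtain ⟨j, _, hall⟩ := hex
      exact ⟨j, hall⟩
    · push_neg at hex
      have hΔmem : ∀ j ∈ Finset.Icc 1 (d-1), (Finset.Icc 1 (k+1)).erase j ∈ G := by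
        intro j hj
        obtain ⟨A, hA, hjA⟩ := hex j hj
        have hAF := hG hA
        rw [Finset.mem_union] at hAF
        rcases hAF with h1 | h2
        · exact absurd ((Finset.mem_filter.mp h1).2.1 hj) hjA
        · rw [Finset.mem_image] at h2
          obtain ⟨i, hi, rfl⟩ := h2
          have hji : j = i := by
            by_contra hne'
            apply hjA
            rw [Finset.mem_erase]
            refine ⟨hne', ?_⟩
            simp only [Finset.mem_Icc] at hj ⊢
            omega
          subst hji
          exact hA
      set Δ : Finset (Finset ℕ) :=
        (Finset.Icc 1 (d-1)).image (fun j => (Finset.Icc 1 (k+1)).erase j) with hΔdef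
      have hΔG : Δ ⊆ G := by
        intro B hB
        rw [hΔdef, Finset.mem_image] at hB
        obtain ⟨j, hj, rfl⟩ := hB
        exact hΔmem j hj
      have hΔcard : Δ.card = d - 1 := by
        rw [hΔdef, Finset.card_image_of_injOn, Nat.card_Icc]
        · omega
        · intro i hi j hj hij
          simp only [Finset.coe_Icc, Set.mem_Icc] at hi hj
          have hij' : (Finset.Icc 1 (k+1)).erase i = (Finset.Icc 1 (k+1)).erase j := hij
          by_contra hne'
          have hmem : i ∈ (Finset.Icc 1 (k+1)).erase j := by
            rw [Finset.mem_erase, Finset.mem_Icc]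
            exact ⟨hne', by omega, by omega⟩
          rw [← hij', Finset.mem_erase] at hmem
          exact hmem.1 rfl
      have hmemΔ : ∀ B ∈ Δ, ∀ y, d ≤ y → y ≤ k + 1 → y ∈ B := by
        intro B hB y hy1 hy2
        rw [hΔdef, Finset.mem_image] at hB
        obtain ⟨j, hj, rfl⟩ := hB
        rw [Finset.mem_erase, Finset.mem_Icc]
        simp only [Finset.mem_Icc] at hj
        omega
      by_cases hsd : (G \ Δ).Nonempty
      · obtain ⟨A, hA⟩ := hsd
        have hcard1 : (G \ Δ).card ≤ 1 := by
          rw [Finset.card_sdiff_of_subset hΔG, hΔcard]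
          omega
        have huniq : ∀ B ∈ G \ Δ, B = A :=
          fun B hB => Finset.card_le_one.mp hcard1 B hB A hA
        rw [Finset.mem_sdiff] at hA
        have hAF1 : A ∈ ((Finset.Icc 1 n).powersetCard k).filter
            (fun A => Finset.Icc 1 (d - 1) ⊆ A ∧ (A ∩ Finset.Icc d (k + 1)).Nonempty) := by
          have := hG hA.1
          rw [Finset.mem_union] at this
          rcases this with h1 | h2
          · exact h1
          · exact absurd h2 (by rw [hΔdef] at hA; exact fun h => hA.2 h)
        obtain ⟨y, hy⟩ := (Finset.mem_filter.mp hAF1).2.2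
        rw [Finset.mem_inter, Finset.mem_Icc] at hy
        refine ⟨y, fun B hB => ?_⟩
        by_cases hBΔ : B ∈ Δ
        · exact hmemΔ B hBΔ y hy.2.1 hy.2.2
        · rw [huniq B (Finset.mem_sdiff.mpr ⟨hB, hBΔ⟩)]
          exact hy.1
      · rw [Finset.not_nonempty_iff_eq_empty, Finset.sdiff_eq_empty_iff_subset] at hsd
        exact ⟨d, fun B hB => hmemΔ B (hsd hB) d le_rfl (by omega)⟩
  · -- nontrivial
    intro x
    by_cases hx1 : x ∈ Finset.Icc 1 (d-1)
    · refine ⟨(Finset.Icc 1 (k+1)).erase x, ?_, ?_⟩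
      · exact Finset.mem_union_right _ (Finset.mem_image_of_mem _ hx1)
      · simp
    · by_cases hx2 : x ∈ Finset.Icc 1 (k+1)
      · refine ⟨(Finset.Icc 1 (k+1)).erase x, ?_, by simp⟩
        apply Finset.mem_union_left
        rw [Finset.mem_filter, Finset.mem_powersetCard]
        refine ⟨⟨?_, ?_⟩, ?_, ?_⟩
        · intro y hy
          rw [Finset.mem_erase, Finset.mem_Icc] at hy
          rw [Finset.mem_Icc]; omega
        · rw [Finset.card_erase_of_mem hx2, Nat.card_Icc]; omega
        · intro j hj
          rw [Finset.mem_Icc] at hj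
          rw [Finset.mem_erase, Finset.mem_Icc]
          simp only [Finset.mem_Icc] at hx1 hx2
          refine ⟨by omega, by omega, by omega⟩
        · refine ⟨if x = d then d + 1 else d, ?_⟩
          rw [Finset.mem_inter, Finset.mem_erase, Finset.mem_Icc, Finset.mem_Icc]
          split <;> omega
      · refine ⟨Finset.Icc 1 k, ?_, ?_⟩
        · apply Finset.mem_union_left
          rw [Finset.mem_filter, Finset.mem_powersetCard]
          refine ⟨⟨?_, ?_⟩, ?_, ?_⟩
          · intro y hy; rw [Finset.mem_Icc] at hy ⊢; omega
          · rw [Nat.card_Icc]; omega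
          · intro j hj; rw [Finset.mem_Icc] at hj ⊢; omega
          · exact ⟨d, by rw [Finset.mem_inter, Finset.mem_Icc, Finset.mem_Icc]; omega⟩
        · intro h
          rw [Finset.mem_Icc] at h
          simp only [Finset.mem_Icc] at hx2
          omega
end

section
/- The family B(k,d) = {B ∈ C([n],k) : |B ∩ [d-1]| = d-2, [d,k] ⊆ B} ∪ {B ∈ C([n],k) : [d-1] ⊆ B, B ∩ [d,k] ≠ ∅} is a d-wise intersecting family with ⋂B(k,d) = ∅, provided n ≥ k+1 and 2 ≤ d < k. -/
open Finset

theorem B_family_is_dwise_nontrivial (n k d : ℕ) (hd : 2 ≤ d) (hdk : d < k)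
    (hn : k + 1 ≤ n) :
    DWiseIntersecting d
      ((((Finset.Icc 1 n).powersetCard k).filter
          (fun B => (B ∩ Finset.Icc 1 (d - 1)).card = d - 2 ∧ Finset.Icc d k ⊆ B)) ∪
        (((Finset.Icc 1 n).powersetCard k).filter
          (fun B => Finset.Icc 1 (d - 1) ⊆ B ∧ (B ∩ Finset.Icc d k).Nonempty))) ∧
    NonTrivialFam
      ((((Finset.Icc 1 n).powersetCard k).filter
          (fun B => (B ∩ Finset.Icc 1 (d - 1)).card = d - 2 ∧ Finset.Icc d k ⊆ B)) ∪
        (((Finset.Icc 1 n).powersetCard k).filter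
          (fun B => Finset.Icc 1 (d - 1) ⊆ B ∧ (B ∩ Finset.Icc d k).Nonempty))) := by
  classical
  have hdk' : d ≤ k := hdk.le
  constructor
  · -- d-wise intersecting
    intro G hG hne hcard
    have hmem : ∀ A ∈ G,
        ((A ∩ Finset.Icc 1 (d - 1)).card = d - 2 ∧ Finset.Icc d k ⊆ A) ∨
        (Finset.Icc 1 (d - 1) ⊆ A ∧ (A ∩ Finset.Icc d k).Nonempty) := by
      intro A hA
      have h := hG hA
      rw [Finset.mem_union] at h
      rcases h with h | h
      · exact Or.inl (Finset.mem_filter.1 h).2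
      · exact Or.inr (Finset.mem_filter.1 h).2
    suffices h : ∃ x, ∀ A ∈ G, x ∈ A by
      obtain ⟨x, hx⟩ := h
      have hle : ({x} : Finset ℕ) ≤ G.inf' hne id :=
        Finset.le_inf' hne id (fun b hb => Finset.singleton_subset_iff.2 (hx b hb))
      exact ⟨x, Finset.singleton_subset_iff.1 hle⟩
    set P2 : Finset ℕ → Prop :=
      fun B => Finset.Icc 1 (d - 1) ⊆ B ∧ (B ∩ Finset.Icc d k).Nonempty with hP2
    set G2 := G.filter P2 with hG2def
    have hG1mem : ∀ A ∈ G, A ∉ G2 →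
        (A ∩ Finset.Icc 1 (d - 1)).card = d - 2 ∧ Finset.Icc d k ⊆ A := by
      intro A hA hA2
      rcases hmem A hA with h | h
      · exact h
      · exact absurd (Finset.mem_filter.2 ⟨hA, h⟩) hA2
    rcases Nat.lt_or_ge G2.card 2 with h2 | h2
    · rcases Nat.eq_zero_or_pos G2.card with h0 | h1
      · -- no member of the second type: d is common
        refine ⟨d, fun A hA => ?_⟩
        have hA2 : A ∉ G2 := by
          intro hA2
          rw [Finset.card_eq_zero.1 h0] at hA2
          exact absurd hA2 (Finset.notMem_empty A)
        exact (hG1mem A hA hA2).2 (Finset.mem_Icc.2 ⟨le_refl d, hdk'⟩)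
      · -- exactly one member of the second type
        have h1' : G2.card = 1 := by omega
        obtain ⟨B, hB⟩ := Finset.card_eq_one.1 h1'
        have hBG : B ∈ G2 := by rw [hB]; exact Finset.mem_singleton_self B
        have hBf := Finset.mem_filter.1 hBG
        obtain ⟨x, hx⟩ := hBf.2.2
        rw [Finset.mem_inter] at hx
        refine ⟨x, fun A hA => ?_⟩
        by_cases hA2 : A ∈ G2
        · rw [hB, Finset.mem_singleton] at hA2
          rw [hA2]; exact hx.1
        · exact (hG1mem A hA hA2).2 hx.2
    · -- at least two members of the second type
      set G1 := G.filter (fun B => ¬ P2 B) with hG1def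
      have hsum : G2.card + G1.card = G.card := by
        rw [hG2def, hG1def]
        exact Finset.card_filter_add_card_filter_not P2
      have hG1card : G1.card ≤ d - 2 := by omega
      have hIcard : (Finset.Icc 1 (d - 1)).card = d - 1 := by
        rw [Nat.card_Icc]; omega
      set S := G1.biUnion (fun A => Finset.Icc 1 (d - 1) \ A) with hS
      have hScard : S.card ≤ d - 2 := by
        calc S.card ≤ ∑ A ∈ G1, (Finset.Icc 1 (d - 1) \ A).card := Finset.card_biUnion_le
          _ ≤ ∑ _A ∈ G1, 1 := by
              refine Finset.sum_le_sum (fun A hA => ?_)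
              have hAf := Finset.mem_filter.1 hA
              have hA2 : A ∉ G2 := by
                intro hc
                exact hAf.2 (Finset.mem_filter.1 hc).2
              have hc := (hG1mem A hAf.1 hA2).1
              have hkey := Finset.card_sdiff_add_card_inter (Finset.Icc 1 (d - 1)) A
              rw [Finset.inter_comm] at hc
              omega
          _ = G1.card := by simp
          _ ≤ d - 2 := hG1card
      have hnsub : ¬ (Finset.Icc 1 (d - 1) ⊆ S) := by
        intro hsub
        have := Finset.card_le_card hsub
        omega
      obtain ⟨x, hxI, hxS⟩ := Finset.not_subset.1 hnsub
      refine ⟨x, fun A hA => ?_⟩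
      by_cases hA2 : A ∈ G2
      · exact (Finset.mem_filter.1 hA2).2.1 hxI
      · have hA1 : A ∈ G1 := by
          refine Finset.mem_filter.2 ⟨hA, fun hP => hA2 (Finset.mem_filter.2 ⟨hA, hP⟩)⟩
        by_contra hxA
        exact hxS (Finset.mem_biUnion.2 ⟨A, hA1, Finset.mem_sdiff.2 ⟨hxI, hxA⟩⟩)
  · -- non-trivial
    intro x
    by_cases hx : x ∈ Finset.Icc 1 k
    · rw [Finset.mem_Icc] at hx
      refine ⟨Finset.Icc 1 (k + 1) \ {x}, ?_, ?_⟩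
      · have hpc : Finset.Icc 1 (k + 1) \ {x} ∈ (Finset.Icc 1 n).powersetCard k := by
          rw [Finset.mem_powersetCard]
          constructor
          · exact (Finset.sdiff_subset).trans (Finset.Icc_subset_Icc_right hn)
          · rw [Finset.card_sdiff_of_subset (Finset.singleton_subset_iff.2
              (Finset.mem_Icc.2 ⟨hx.1, hx.2.trans (Nat.le_succ k)⟩))]
            rw [Nat.card_Icc, Finset.card_singleton]
            omega
        rw [Finset.mem_union]
        by_cases hxd : x ≤ d - 1
        · -- first type
          left
          rw [Finset.mem_filter]
          refine ⟨hpc, ?_, ?_⟩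
          · have heq : (Finset.Icc 1 (k + 1) \ {x}) ∩ Finset.Icc 1 (d - 1)
                = Finset.Icc 1 (d - 1) \ {x} := by
              ext y
              simp only [Finset.mem_inter, Finset.mem_sdiff, Finset.mem_Icc,
                Finset.mem_singleton]
              constructor
              · rintro ⟨⟨hy1, hy2⟩, hy3⟩; exact ⟨hy3, hy2⟩
              · rintro ⟨⟨hy1, hy2⟩, hy3⟩; exact ⟨⟨⟨hy1, by omega⟩, hy3⟩, hy1, hy2⟩
            rw [heq, Finset.card_sdiff_of_subset (Finset.singleton_subset_iff.2
              (Finset.mem_Icc.2 ⟨hx.1, hxd⟩))]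
            rw [Nat.card_Icc, Finset.card_singleton]
            omega
          · intro y hy
            rw [Finset.mem_Icc] at hy
            rw [Finset.mem_sdiff, Finset.mem_Icc, Finset.mem_singleton]
            exact ⟨⟨by omega, by omega⟩, by omega⟩
        · -- second type
          right
          rw [Finset.mem_filter]
          refine ⟨hpc, ?_, ?_⟩
          · intro y hy
            rw [Finset.mem_Icc] at hy
            rw [Finset.mem_sdiff, Finset.mem_Icc, Finset.mem_singleton]
            exact ⟨⟨by omega, by omega⟩, by omega⟩
          · refine ⟨if x = d then d + 1 else d, ?_⟩
            rw [Finset.mem_inter, Finset.mem_sdiff, Finset.mem_Icc,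
              Finset.mem_singleton, Finset.mem_Icc]
            split_ifs with h
            · exact ⟨⟨⟨by omega, by omega⟩, by omega⟩, by omega, by omega⟩
            · exact ⟨⟨⟨by omega, by omega⟩, by omega⟩, by omega, by omega⟩
      · rw [Finset.mem_sdiff, Finset.mem_singleton]
        push_neg
        intro _
        rfl
    · -- x outside [1,k]: use [1,k]
      rw [Finset.mem_Icc] at hx
      push_neg at hx
      refine ⟨Finset.Icc 1 k, ?_, ?_⟩
      · rw [Finset.mem_union]
        right
        rw [Finset.mem_filter]
        refine ⟨?_, ?_, ⟨d, ?_⟩⟩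
        · rw [Finset.mem_powersetCard]
          exact ⟨Finset.Icc_subset_Icc_right (by omega), by rw [Nat.card_Icc]; omega⟩
        · exact Finset.Icc_subset_Icc_right (by omega)
        · rw [Finset.mem_inter, Finset.mem_Icc, Finset.mem_Icc]
          exact ⟨⟨by omega, hdk'⟩, le_refl d, hdk'⟩
      · rw [Finset.mem_Icc]
        omega
end

section
/- For n sufficiently large relative to k and d (with 2 ≤ d < k), |A(k,d)| ≥ |H(k,d)| if and only if 2d ≥ k+1. -/
/-!
Write `k = d + q + 1`, `c = d - 1`, `a = n - k - 1` and `m = a + q + 1 = n - d - 1`. Counting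
`k`-sets by their trace on a fixed set gives `|A(k,d)| = (c + 2) C(m, q+1) + C(m, q)` and
`|H(k,d)| + C(a, q+2) = C(m+2, q+2) + c`. After Pascal's rule, `|H| ≤ |A|` becomes
`C(m, q+2) - C(a, q+2) + c ≤ c C(m, q+1)`, and by the hockey-stick identity the difference on
the left is `∑_{i ≤ q} C(a+i, q+1)`, a sum of `q + 1` terms lying between `C(a, q+1)` and
`C(m-1, q+1)`. If `q + 1 ≤ c`, i.e. `k + 1 ≤ 2d`, the sum is at most `c C(m-1, q+1)` and the
inequality holds for every `n`. Otherwise the sum is at least `(c + 1) C(a, q+1)`, while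
`m (C(m, r) - C(m-r, r)) ≤ r² C(m, r)` shows `C(a, q+1) / C(m, q+1) → 1`, so
`(c + 1) C(a, q+1) > c C(m, q+1)` as soon as `m > (c + 1)(q + 1)²`.
-/

open Finset

namespace Finset

variable {α : Type*} [DecidableEq α] {S T B V : Finset α} {k : ℕ}

theorem card_powersetCard_filter_inter_eq (hTS : T ⊆ S) (hBT : B ⊆ T) (hB : #B ≤ k) :
    #{A ∈ S.powersetCard k | A ∩ T = B} = (#S - #T).choose (k - #B) := by
  rw [← card_sdiff_of_subset hTS, ← card_powersetCard]
  refine card_bij' (fun A _ => A \ T) (fun C _ => C ∪ B) ?_ ?_ ?_ ?_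
  · intro A hA
    simp only [mem_filter, mem_powersetCard] at hA ⊢
    obtain ⟨⟨hAS, rfl⟩, rfl⟩ := hA
    refine ⟨sdiff_subset_sdiff hAS le_rfl, ?_⟩
    rw [← card_sdiff_add_card_inter A T]
    omega
  · intro C hC
    rw [mem_powersetCard] at hC
    have hCT : Disjoint C T := disjoint_of_subset_left hC.1 sdiff_disjoint
    simp only [mem_filter, mem_powersetCard]
    refine ⟨⟨union_subset (hC.1.trans sdiff_subset) (hBT.trans hTS), ?_⟩, ?_⟩
    · rw [card_union_of_disjoint (hCT.mono_right hBT)]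
      omega
    · rw [union_inter_distrib_right, disjoint_iff_inter_eq_empty.1 hCT, inter_eq_left.2 hBT,
        empty_union]
  · intro A hA
    rw [← (mem_filter.1 hA).2, sdiff_union_inter]
  · intro C hC
    have hCT : Disjoint C T := disjoint_of_subset_left (mem_powersetCard.1 hC).1 sdiff_disjoint
    rw [union_sdiff_distrib, hCT.sdiff_eq_left, sdiff_eq_empty_iff_subset.2 hBT, union_empty]

theorem card_powersetCard_filter_card_inter_eq {j : ℕ} (hTS : T ⊆ S) (hj : j ≤ k) :
    #{A ∈ S.powersetCard k | #(A ∩ T) = j} = (#T).choose j * (#S - #T).choose (k - j) := by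
  have hfib : #{A ∈ S.powersetCard k | #(A ∩ T) = j}
      = ∑ B ∈ T.powersetCard j, #{A ∈ S.powersetCard k | A ∩ T = B} := by
    rw [card_eq_sum_card_fiberwise (f := (· ∩ T)) (t := T.powersetCard j)]
    · refine sum_congr rfl fun B hB => ?_
      rw [filter_filter]
      congr! 2 with A
      rw [(mem_powersetCard.1 hB).2.symm]
      exact and_iff_right_of_imp fun h => h ▸ rfl
    · intro A hA
      simp only [coe_filter, Set.mem_ofPred_eq, mem_coe, mem_powersetCard] at hA ⊢
      exact ⟨inter_subset_right, hA.2⟩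
  have hfiber : ∀ B ∈ T.powersetCard j,
      #{A ∈ S.powersetCard k | A ∩ T = B} = (#S - #T).choose (k - j) := by
    intro B hB
    obtain ⟨hBT, rfl⟩ := mem_powersetCard.1 hB
    exact card_powersetCard_filter_inter_eq hTS hBT hj
  rw [hfib, sum_congr rfl hfiber, sum_const, card_powersetCard, smul_eq_mul]

theorem card_powersetCard_filter_le_card_inter {d m q : ℕ} (hTS : T ⊆ S) (hT : #T = d + 1)
    (hS : #S = m + (d + 1)) :
    #{A ∈ S.powersetCard (d + q + 1) | d ≤ #(A ∩ T)} = (d + 1) * m.choose (q + 1) + m.choose q := by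
  have hsplit : {A ∈ S.powersetCard (d + q + 1) | d ≤ #(A ∩ T)}
      = {A ∈ S.powersetCard (d + q + 1) | #(A ∩ T) = d}
        ∪ {A ∈ S.powersetCard (d + q + 1) | #(A ∩ T) = d + 1} := by
    rw [← filter_or]
    refine filter_congr fun A _ => ?_
    have := card_le_card ((inter_subset_right : A ∩ T ⊆ T))
    omega
  rw [hsplit, card_union_of_disjoint (disjoint_filter.2 fun _ _ h => by omega),
    card_powersetCard_filter_card_inter_eq hTS (by omega),
    card_powersetCard_filter_card_inter_eq hTS (by omega), hT, show #S - (d + 1) = m by omega,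
    Nat.choose_succ_self_right, Nat.choose_self, one_mul, show d + q + 1 - d = q + 1 by omega,
    show d + q + 1 - (d + 1) = q by omega]

theorem inter_union_eq_left_iff {A : Finset α} (h : Disjoint B V) :
    A ∩ (B ∪ V) = B ↔ B ⊆ A ∧ Disjoint A V := by
  simp only [Finset.ext_iff, subset_iff, disjoint_left, mem_inter, mem_union] at h ⊢
  grind

theorem card_powersetCard_filter_superset_inter_nonempty_add {a b v r : ℕ} (hBV : Disjoint B V)
    (hS : B ∪ V ⊆ S) (hB : #B = b) (hV : #V = v) (hk : k = b + r) (ha : #S = a + b + v) :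
    #{A ∈ S.powersetCard k | B ⊆ A ∧ (A ∩ V).Nonempty} + a.choose r = (a + v).choose r := by
  have hBV_card : #(B ∪ V) = b + v := by rw [card_union_of_disjoint hBV, hB, hV]
  have hsuper : #{A ∈ S.powersetCard k | B ⊆ A} = (a + v).choose r := by
    simp_rw [← inter_eq_right (s := B)]
    rw [card_powersetCard_filter_inter_eq (subset_union_left.trans hS) subset_rfl (by omega)]
    congr 1 <;> omega
  have hexact : #{A ∈ S.powersetCard k | A ∩ (B ∪ V) = B} = a.choose r := by
    rw [card_powersetCard_filter_inter_eq hS subset_union_left (by omega)]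
    congr 1 <;> omega
  rw [← hsuper, ← hexact, ← card_filter_add_card_filter_not (s := {A ∈ S.powersetCard k | B ⊆ A})
    (fun A => (A ∩ V).Nonempty), filter_filter, filter_filter]
  congr 3
  ext A
  rw [inter_union_eq_left_iff hBV, not_nonempty_iff_eq_empty, disjoint_iff_inter_eq_empty]

theorem card_filter_union_image_erase_add {a b v r : ℕ} (hBV : Disjoint B V) (hS : B ∪ V ⊆ S)
    (hB : #B = b) (hV : #V = v) (hk : k = b + r) (ha : #S = a + b + v) :
    #({A ∈ S.powersetCard k | B ⊆ A ∧ (A ∩ V).Nonempty} ∪ B.image fun i => (B ∪ V).erase i)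
      + a.choose r = (a + v).choose r + b := by
  have hdisj : Disjoint {A ∈ S.powersetCard k | B ⊆ A ∧ (A ∩ V).Nonempty}
      (B.image fun i => (B ∪ V).erase i) := by
    refine disjoint_left.2 fun A hA hA' => ?_
    obtain ⟨i, hi, rfl⟩ := mem_image.1 hA'
    exact notMem_erase i _ ((mem_filter.1 hA).2.1 hi)
  have himage : #(B.image fun i => (B ∪ V).erase i) = b :=
    hB ▸ card_image_of_injOn ((erase_injOn _).mono (coe_subset.2 subset_union_left))
  rw [card_union_of_disjoint hdisj, himage,
    ← card_powersetCard_filter_superset_inter_nonempty_add hBV hS hB hV hk ha]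
  ring

end Finset

namespace Nat

theorem choose_add_eq_add_sum_choose (a r s : ℕ) :
    (a + s).choose (r + 1) = a.choose (r + 1) + ∑ i ∈ range s, (a + i).choose r := by
  induction s with
  | zero => simp
  | succ s ih =>
    rw [sum_range_succ, ← add_assoc a s 1, choose_succ_succ', ih]
    ring

theorem choose_add_two_add_two (m q : ℕ) :
    (m + 2).choose (q + 2) = m.choose q + 2 * m.choose (q + 1) + m.choose (q + 2) := by
  rw [choose_succ_succ', choose_succ_succ' m, choose_succ_succ' m]
  ring

theorem add_mul_choose_add_le (a r : ℕ) :
    (a + r) * (a + r).choose r ≤ (a + r) * a.choose r + r ^ 2 * (a + r).choose r := by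
  rcases r with _ | q
  · simp
  have hsum : ∑ i ∈ range (q + 1), (a + i).choose q ≤ (q + 1) * (a + q).choose q := by
    simpa using sum_le_card_nsmul (range (q + 1)) _ _ fun i hi =>
      choose_le_choose q (by simp at hi; omega : a + i ≤ a + q)
  have hpascal := choose_add_eq_add_sum_choose a q (q + 1)
  have hscale : (a + q + 1) * (a + q).choose q = (a + q + 1).choose (q + 1) * (q + 1) :=
    add_one_mul_choose_eq (a + q) q
  rw [← add_assoc] at hpascal ⊢
  calc (a + q + 1) * (a + q + 1).choose (q + 1)
      ≤ (a + q + 1) * (a.choose (q + 1) + (q + 1) * (a + q).choose q) := by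
        rw [hpascal]; gcongr
    _ = (a + q + 1) * a.choose (q + 1) + (q + 1) ^ 2 * (a + q + 1).choose (q + 1) := by
        rw [mul_add, mul_left_comm, hscale]; ring

theorem choose_add_le_of_lt (a q c : ℕ) (hqc : q < c) :
    (a + q + 1).choose (q + 2) + c ≤ c * (a + q + 1).choose (q + 1) + a.choose (q + 2) := by
  have hsum : ∑ i ∈ range (q + 1), (a + i).choose (q + 1) ≤ c * (a + q).choose (q + 1) :=
    calc ∑ i ∈ range (q + 1), (a + i).choose (q + 1) ≤ (q + 1) * (a + q).choose (q + 1) := by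
          simpa using sum_le_card_nsmul (range (q + 1)) _ _ fun i hi =>
            choose_le_choose (q + 1) (by simp at hi; omega : a + i ≤ a + q)
      _ ≤ c * (a + q).choose (q + 1) := by gcongr; omega
  have hc : c ≤ c * (a + q).choose q := Nat.le_mul_of_pos_right c (choose_pos (by omega))
  have hpascal : (a + q + 1).choose (q + 2)
      = a.choose (q + 2) + ∑ i ∈ range (q + 1), (a + i).choose (q + 1) :=
    choose_add_eq_add_sum_choose a (q + 1) (q + 1)
  rw [hpascal, choose_succ_succ', mul_add]
  omega

theorem lt_choose_add_of_le (a q c : ℕ) (hcq : c ≤ q) (ha : (c + 1) * (q + 1) ^ 2 < a + q + 1) :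
    c * (a + q + 1).choose (q + 1) + a.choose (q + 2) < (a + q + 1).choose (q + 2) + c := by
  have hkey := add_mul_choose_add_le a (q + 1)
  rw [← add_assoc] at hkey
  have hpos : 0 < (a + q + 1).choose (q + 1) := choose_pos (by omega)
  have hlt : c * (a + q + 1).choose (q + 1) < (c + 1) * a.choose (q + 1) := by
    refine Nat.lt_of_mul_lt_mul_left (a := a + q + 1) ?_
    have h1 := Nat.mul_lt_mul_of_pos_right ha hpos
    have h2 := Nat.mul_le_mul_left (c + 1) hkey
    nlinarith
  have hsum : (c + 1) * a.choose (q + 1) ≤ ∑ i ∈ range (q + 1), (a + i).choose (q + 1) :=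
    calc (c + 1) * a.choose (q + 1) ≤ (q + 1) * a.choose (q + 1) := by gcongr
      _ ≤ _ := by
          simpa using card_nsmul_le_sum (range (q + 1)) _ _ fun i _ =>
            choose_le_choose (q + 1) (le_add_right a i)
  have hpascal : (a + q + 1).choose (q + 2)
      = a.choose (q + 2) + ∑ i ∈ range (q + 1), (a + i).choose (q + 1) :=
    choose_add_eq_add_sum_choose a (q + 1) (q + 1)
  omega

end Nat

theorem A_vs_H_size_comparison (k d : ℕ) (hd : 2 ≤ d) (hdk : d < k) :
    ∃ N : ℕ, ∀ n ≥ N,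
      (((((Finset.Icc 1 n).powersetCard k).filter
            (fun A => Finset.Icc 1 (d - 1) ⊆ A ∧ (A ∩ Finset.Icc d (k + 1)).Nonempty)) ∪
          (Finset.Icc 1 (d - 1)).image (fun i => (Finset.Icc 1 (k + 1)).erase i)).card ≤
        (((Finset.Icc 1 n).powersetCard k).filter
          (fun A => d ≤ (A ∩ Finset.Icc 1 (d + 1)).card)).card ↔ k + 1 ≤ 2 * d) := by
  obtain ⟨q, rfl⟩ : ∃ q, k = d + q + 1 := ⟨k - d - 1, by omega⟩
  refine ⟨d * (q + 1) ^ 2 + d + q + 2, fun n hn => ?_⟩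
  obtain ⟨a, rfl⟩ : ∃ a, n = a + (d + q + 2) := ⟨n - (d + q + 2), by omega⟩
  have hT : Icc 1 (d - 1) ∪ Icc d (d + q + 1 + 1) = Icc 1 (d + q + 1 + 1) := by
    ext; simp only [mem_union, mem_Icc]; omega
  have hH := card_filter_union_image_erase_add (S := Icc 1 (a + (d + q + 2)))
    (B := Icc 1 (d - 1)) (V := Icc d (d + q + 1 + 1)) (k := d + q + 1) (a := a) (v := q + 3)
    (r := q + 2)
    (disjoint_left.2 fun x hx hx' => by simp only [mem_Icc] at hx hx'; omega)
    (by rw [hT]; exact Icc_subset_Icc_right (by omega)) (Nat.card_Icc 1 (d - 1))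
    (by simp only [Nat.card_Icc]; omega) (by omega) (by simp only [Nat.card_Icc]; omega)
  rw [hT, show a + (q + 3) = a + q + 1 + 2 by ring] at hH
  rw [card_powersetCard_filter_le_card_inter (m := a + q + 1) (Icc_subset_Icc_right (by omega))
    (by simp) (by simp; omega)]
  have hpascal := Nat.choose_add_two_add_two (a + q + 1) q
  have hsplit : (d + 1) * (a + q + 1).choose (q + 1)
      = (d - 1) * (a + q + 1).choose (q + 1) + 2 * (a + q + 1).choose (q + 1) := by
    rw [← add_mul, show d - 1 + 2 = d + 1 by omega]
  constructor
  · intro hle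
    by_contra hlt
    have := Nat.lt_choose_add_of_le a q (d - 1) (by omega)
      (by rw [Nat.sub_add_cancel (by omega)]; omega)
    omega
  · intro hle
    have := Nat.choose_add_le_of_lt a q (d - 1) (by omega)
    omega
end

section
/- For 2 ≤ d < k and n sufficiently large, |A(k,d)| ≤ |B(k,d)| ≤ |H(k,d)| whenever 2d < k, with equalities if and only if k = 3 and d = 2. -/
/-!
Members of `A(k,d)` contain `[d+1]` minus one point, so `|A| ≤ (d+1)·C(n-d, k-d)`. Write
`B(k,d) = B₁ ∪ B₂` for its two displayed parts and `H₁` for the first part of `H(k,d)`. The sets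
whose trace on `[k]` is `[d-1] ∪ {j}`, `j ∈ [d,k]`, give `|B₂| ≥ (k-d+1)·C(n-k, k-d)`; since
`C(n-d, k-d) / C(n-k, k-d) → 1` and `k-d+1 > d+1`, eventually `|A| < |B|`.
`H₁` contains `B₂` together with the `C(n-k-1, k-d)` sets whose trace on `[k+1]` is
`[d-1] ∪ {k+1}`, whereas `|B₁| ≤ (d-1)(n-k+1)`; as `k-d ≥ 2` the binomial coefficient wins, so
eventually `|B| < |H|`. Both inequalities are strict and `2d < k` excludes `k = 3, d = 2`, so both
sides of the equivalence are false.
-/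

open Finset Filter

namespace Nat

theorem eventually_mul_choose_succ_lt (c r : ℕ) :
    ∀ᶠ m in atTop, c * (m + 1).choose r < (c + 1) * m.choose r := by
  filter_upwards [eventually_gt_atTop ((c + 1) * r)] with m hm
  have hrm : r ≤ m := by nlinarith
  have hpos : 0 < m.choose r := choose_pos hrm
  have hstep : c * (m + 1) < (c + 1) * (m + 1 - r) := by
    obtain ⟨s, hs⟩ : ∃ s, m + 1 = s + r := ⟨m + 1 - r, by omega⟩
    rw [hs, Nat.add_sub_cancel]
    nlinarith
  have hchoose := choose_mul_succ_eq m r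
  refine Nat.lt_of_mul_lt_mul_right (a := m + 1 - r) ?_
  calc c * (m + 1).choose r * (m + 1 - r) = m.choose r * (c * (m + 1)) := by
        rw [mul_assoc, ← hchoose]; ring
    _ < m.choose r * ((c + 1) * (m + 1 - r)) := Nat.mul_lt_mul_of_pos_left hstep hpos
    _ = (c + 1) * m.choose r * (m + 1 - r) := by ring

theorem eventually_mul_choose_add_lt (r a : ℕ) :
    ∀ c, ∀ᶠ m in atTop, c * (m + a).choose r < (c + 1) * m.choose r := by
  induction a with
  | zero =>
    intro c
    filter_upwards [eventually_ge_atTop r] with m hm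
    have := choose_pos hm
    simp only [add_zero]
    nlinarith
  | succ a ih =>
    intro c
    -- two steps of ratio `(2c+2)/(2c+1)` compose to less than `(c+1)/c`, as `4c(c+1) < (2c+1)^2`
    filter_upwards [(tendsto_add_atTop_nat 1).eventually (ih (2 * c + 1)),
      eventually_mul_choose_succ_lt (2 * c + 1) r] with m h₁ h₂
    rw [show m + (a + 1) = m + 1 + a by ring]
    nlinarith

theorem eventually_mul_add_lt_choose (c a : ℕ) {r : ℕ} (hr : 2 ≤ r) :
    ∀ᶠ m in atTop, c * (m + a) < m.choose r := by
  filter_upwards [eventually_ge_atTop (c * r ! + 2 * r + a)] with m hm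
  set t := m + 1 - r
  have hsq : t ^ 2 ≤ r ! * m.choose r :=
    calc t ^ 2 ≤ t ^ r := Nat.pow_le_pow_right (by omega) hr
      _ ≤ m.descFactorial r := pow_sub_le_descFactorial m r
      _ = r ! * m.choose r := descFactorial_eq_factorial_mul_choose m r
  have hm' : m + a = t + (r - 1 + a) := by omega
  have hlin : r ! * (c * (m + a)) < t ^ 2 := by
    rw [hm']
    have ht' : c * r ! + (r - 1 + a) + 1 ≤ t := by omega
    have h₁ := Nat.mul_le_mul_right t ht'
    have h₂ : c * r ! * (r - 1 + a) ≤ t * (r - 1 + a) := Nat.mul_le_mul_right _ (by omega)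
    have ht0 : 0 < t := by omega
    nlinarith
  exact Nat.lt_of_mul_lt_mul_left (hlin.trans_le hsq)

end Nat

namespace Finset

variable {α : Type*} [DecidableEq α]

theorem card_filter_powersetCard_inter_eq {S T U : Finset α} (k : ℕ) (hST : S ⊆ T)
    (hTU : T ⊆ U) (hSk : #S ≤ k) :
    #{A ∈ U.powersetCard k | A ∩ T = S} = (#U - #T).choose (k - #S) := by
  have hfilter : {A ∈ U.powersetCard k | A ∩ T = S}
      = {A ∈ (U \ (T \ S)).powersetCard k | S ⊆ A} := by
    ext A
    simp only [mem_filter, mem_powersetCard]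
    constructor
    · rintro ⟨⟨hAU, hAk⟩, rfl⟩
      refine ⟨⟨fun x hx => ?_, hAk⟩, inter_subset_left⟩
      grind
    · rintro ⟨⟨hAU, hAk⟩, hSA⟩
      refine ⟨⟨hAU.trans sdiff_subset, hAk⟩, ?_⟩
      grind
  have hS : S ⊆ U \ (T \ S) := subset_sdiff.mpr ⟨hST.trans hTU, disjoint_sdiff⟩
  rw [hfilter, card_filter_powersetCard_subset S _ k hS hSk,
    card_sdiff_of_subset ((sdiff_subset).trans hTU), card_sdiff_of_subset hST]
  congr 1
  have := card_le_card hST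
  have := card_le_card hTU
  omega

theorem exists_erase_subset_of_card_le {A T : Finset α} (hT : T.Nonempty)
    (h : #T ≤ #(A ∩ T) + 1) : ∃ i ∈ T, T.erase i ⊆ A := by
  by_cases hTA : T ⊆ A
  · obtain ⟨i, hi⟩ := hT
    exact ⟨i, hi, (erase_subset i T).trans hTA⟩
  obtain ⟨i, hiT, hiA⟩ := not_subset.mp hTA
  have hsub : A ∩ T ⊆ T.erase i := fun x hx =>
    mem_erase.mpr ⟨fun hxi => hiA (hxi ▸ (mem_inter.mp hx).1), (mem_inter.mp hx).2⟩
  have heq := eq_of_subset_of_card_le hsub (by rw [card_erase_of_mem hiT]; omega)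
  exact ⟨i, hiT, heq ▸ inter_subset_left⟩

end Finset

def familyA (n k d : ℕ) : Finset (Finset ℕ) :=
  ((Icc 1 n).powersetCard k).filter fun A => d ≤ #(A ∩ Icc 1 (d + 1))

def familyB₁ (n k d : ℕ) : Finset (Finset ℕ) :=
  ((Icc 1 n).powersetCard k).filter fun B => #(B ∩ Icc 1 (d - 1)) = d - 2 ∧ Icc d k ⊆ B

def familyB₂ (n k d : ℕ) : Finset (Finset ℕ) :=
  ((Icc 1 n).powersetCard k).filter fun B => Icc 1 (d - 1) ⊆ B ∧ (B ∩ Icc d k).Nonempty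

def familyH₁ (n k d : ℕ) : Finset (Finset ℕ) :=
  ((Icc 1 n).powersetCard k).filter fun A => Icc 1 (d - 1) ⊆ A ∧ (A ∩ Icc d (k + 1)).Nonempty

theorem card_filter_Icc_powersetCard_erase_subset {n k m i : ℕ} (hi : i ∈ Icc 1 m)
    (hmn : m ≤ n) (hmk : m ≤ k + 1) :
    #{A ∈ (Icc 1 n).powersetCard k | (Icc 1 m).erase i ⊆ A}
      = (n - (m - 1)).choose (k - (m - 1)) := by
  rw [card_filter_powersetCard_subset _ _ _ ((erase_subset i _).trans (Icc_subset_Icc le_rfl hmn))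
    (by rw [card_erase_of_mem hi, Nat.card_Icc]; omega), card_erase_of_mem hi, Nat.card_Icc,
    Nat.card_Icc]
  rfl

theorem card_familyA_le {n k d : ℕ} (hdk : d ≤ k) (hdn : d + 1 ≤ n) :
    #(familyA n k d) ≤ (d + 1) * (n - d).choose (k - d) := by
  have hcover : familyA n k d ⊆ (Icc 1 (d + 1)).biUnion
      fun i => {A ∈ (Icc 1 n).powersetCard k | (Icc 1 (d + 1)).erase i ⊆ A} := by
    intro A hA
    obtain ⟨hA, hcard⟩ := mem_filter.mp hA
    obtain ⟨i, hi, hsub⟩ := exists_erase_subset_of_card_le (nonempty_Icc.mpr (by omega))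
      (by rw [Nat.card_Icc]; omega : #(Icc 1 (d + 1)) ≤ #(A ∩ Icc 1 (d + 1)) + 1)
    exact mem_biUnion.mpr ⟨i, hi, mem_filter.mpr ⟨hA, hsub⟩⟩
  calc #(familyA n k d) ≤ _ := card_le_card hcover
    _ ≤ _ := card_biUnion_le
    _ = ∑ _ ∈ Icc 1 (d + 1), (n - d).choose (k - d) := sum_congr rfl fun i hi => by
        rw [card_filter_Icc_powersetCard_erase_subset hi hdn (by omega), Nat.add_sub_cancel]
    _ = (d + 1) * (n - d).choose (k - d) := by simp

theorem card_familyB₁_le {n k d : ℕ} (hd : 2 ≤ d) (hdk : d ≤ k) (hkn : k ≤ n) :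
    #(familyB₁ n k d) ≤ (d - 1) * (n - k + 1) := by
  have hcover : familyB₁ n k d ⊆ (Icc 1 (d - 1)).biUnion
      fun i => {B ∈ (Icc 1 n).powersetCard k | (Icc 1 k).erase i ⊆ B} := by
    intro B hB
    obtain ⟨hB, hcard, hdkB⟩ := mem_filter.mp hB
    obtain ⟨i, hi, hsub⟩ := exists_erase_subset_of_card_le (nonempty_Icc.mpr (by omega))
      (by rw [Nat.card_Icc]; omega : #(Icc 1 (d - 1)) ≤ #(B ∩ Icc 1 (d - 1)) + 1)
    refine mem_biUnion.mpr ⟨i, hi, mem_filter.mpr ⟨hB, fun x hx => ?_⟩⟩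
    obtain ⟨hxi, hx⟩ := mem_erase.mp hx
    rw [mem_Icc] at hx
    by_cases hxd : x < d
    · exact hsub (mem_erase.mpr ⟨hxi, mem_Icc.mpr (by omega)⟩)
    · exact hdkB (mem_Icc.mpr (by omega))
  calc #(familyB₁ n k d) ≤ _ := card_le_card hcover
    _ ≤ _ := card_biUnion_le
    _ = ∑ _ ∈ Icc 1 (d - 1), (n - k + 1) := sum_congr rfl fun i hi => by
        rw [card_filter_Icc_powersetCard_erase_subset (by rw [mem_Icc] at hi ⊢; omega) hkn
          (by omega)]
        rw [show k - (k - 1) = 1 by omega, Nat.choose_one_right]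
        omega
    _ = (d - 1) * (n - k + 1) := by simp

theorem card_filter_Icc_powersetCard_inter_eq_insert {n k d m j : ℕ} (hd : 1 ≤ d) (hj : d ≤ j)
    (hjm : j ≤ m) (hdk : d ≤ k) (hmn : m ≤ n) :
    #{A ∈ (Icc 1 n).powersetCard k | A ∩ Icc 1 m = insert j (Icc 1 (d - 1))}
      = (n - m).choose (k - d) := by
  have hj' : j ∉ Icc 1 (d - 1) := by simp only [mem_Icc]; omega
  have hcard : #(insert j (Icc 1 (d - 1))) = d := by
    rw [card_insert_of_notMem hj', Nat.card_Icc]; omega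
  rw [card_filter_powersetCard_inter_eq k ?_ (Icc_subset_Icc le_rfl hmn) (hcard.trans_le hdk),
    hcard, Nat.card_Icc, Nat.card_Icc, Nat.add_sub_cancel, Nat.add_sub_cancel]
  intro x hx
  simp only [mem_insert, mem_Icc] at hx ⊢
  omega

theorem le_card_familyB₂ {n k d : ℕ} (hd : 1 ≤ d) (hdk : d ≤ k) (hkn : k ≤ n) :
    (k - d + 1) * (n - k).choose (k - d) ≤ #(familyB₂ n k d) := by
  set fiber := fun j => {B ∈ (Icc 1 n).powersetCard k | B ∩ Icc 1 k = insert j (Icc 1 (d - 1))}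
  have hdisj : (Icc d k : Set ℕ).PairwiseDisjoint fiber := by
    intro i hi j hj hij
    refine disjoint_filter.mpr fun B _ hBi hBj => hij ?_
    have hmem : i ∈ insert j (Icc 1 (d - 1)) := hBj ▸ hBi ▸ mem_insert_self i _
    simp only [coe_Icc, Set.mem_Icc, mem_insert, mem_Icc] at hi hmem
    omega
  have hsub : (Icc d k).biUnion fiber ⊆ familyB₂ n k d := by
    intro B hB
    obtain ⟨j, hj, hBj⟩ := mem_biUnion.mp hB
    obtain ⟨hB, htrace⟩ := mem_filter.mp hBj
    rw [mem_Icc] at hj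
    have hBk : ∀ x, 1 ≤ x → x ≤ k → (x ∈ B ↔ x = j ∨ x ∈ Icc 1 (d - 1)) := fun x h1 h2 => by
      rw [← mem_insert, ← htrace, mem_inter, mem_Icc]; tauto
    refine mem_filter.mpr ⟨hB, fun x hx => ?_, ⟨j, ?_⟩⟩
    · rw [mem_Icc] at hx
      exact (hBk x hx.1 (by omega)).mpr (Or.inr (mem_Icc.mpr hx))
    · exact mem_inter.mpr ⟨(hBk j (by omega) hj.2).mpr (Or.inl rfl), mem_Icc.mpr hj⟩
  calc (k - d + 1) * (n - k).choose (k - d)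
      = ∑ j ∈ Icc d k, #(fiber j) := by
        rw [sum_congr rfl fun j hj => card_filter_Icc_powersetCard_inter_eq_insert hd
          (mem_Icc.mp hj).1 (mem_Icc.mp hj).2 hdk hkn, sum_const, Nat.card_Icc, smul_eq_mul,
          show k + 1 - d = k - d + 1 by omega]
    _ = #((Icc d k).biUnion fiber) := (card_biUnion hdisj).symm
    _ ≤ #(familyB₂ n k d) := card_le_card hsub

theorem card_familyB₂_add_le {n k d : ℕ} (hd : 1 ≤ d) (hdk : d ≤ k) (hkn : k + 1 ≤ n) :
    #(familyB₂ n k d) + (n - (k + 1)).choose (k - d) ≤ #(familyH₁ n k d) := by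
  set F := {A ∈ (Icc 1 n).powersetCard k | A ∩ Icc 1 (k + 1) = insert (k + 1) (Icc 1 (d - 1))}
  have hdisj : Disjoint (familyB₂ n k d) F := by
    refine disjoint_filter.mpr fun A _ hB hF => ?_
    obtain ⟨x, hx⟩ := hB.2
    have hmem : x ∈ insert (k + 1) (Icc 1 (d - 1)) := by
      rw [mem_inter, mem_Icc] at hx
      rw [← hF, mem_inter, mem_Icc]
      exact ⟨hx.1, by omega, by omega⟩
    simp only [mem_inter, mem_Icc, mem_insert] at hx hmem
    omega
  have hsub : familyB₂ n k d ∪ F ⊆ familyH₁ n k d := by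
    refine union_subset (fun A hA => ?_) fun A hA => ?_
    · obtain ⟨hA, hsub, x, hx⟩ := mem_filter.mp hA
      refine mem_filter.mpr ⟨hA, hsub, x, ?_⟩
      simp only [mem_inter, mem_Icc] at hx ⊢
      exact ⟨hx.1, hx.2.1, by omega⟩
    · obtain ⟨hA, htrace⟩ := mem_filter.mp hA
      have hmem : ∀ x, x ∈ insert (k + 1) (Icc 1 (d - 1)) → x ∈ A := fun x hx =>
        (mem_inter.mp (htrace ▸ hx)).1
      refine mem_filter.mpr ⟨hA, fun x hx => hmem x (mem_insert_of_mem hx), k + 1, ?_⟩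
      exact mem_inter.mpr ⟨hmem _ (mem_insert_self _ _), mem_Icc.mpr ⟨by omega, by omega⟩⟩
  calc #(familyB₂ n k d) + (n - (k + 1)).choose (k - d)
      = #(familyB₂ n k d ∪ F) := by
        rw [card_union_of_disjoint hdisj,
          card_filter_Icc_powersetCard_inter_eq_insert hd (by omega) le_rfl hdk hkn]
    _ ≤ #(familyH₁ n k d) := card_le_card hsub

theorem A_le_B_le_H_general (k d : ℕ) (hd : 2 ≤ d) (h2d : 2 * d < k) :
    ∃ N : ℕ, ∀ n ≥ N,
      let Afam := (((Finset.Icc 1 n).powersetCard k).filter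
        (fun A => d ≤ (A ∩ Finset.Icc 1 (d + 1)).card))
      let Bfam := ((((Finset.Icc 1 n).powersetCard k).filter
          (fun B => (B ∩ Finset.Icc 1 (d - 1)).card = d - 2 ∧ Finset.Icc d k ⊆ B)) ∪
        (((Finset.Icc 1 n).powersetCard k).filter
          (fun B => Finset.Icc 1 (d - 1) ⊆ B ∧ (B ∩ Finset.Icc d k).Nonempty)))
      let Hfam := ((((Finset.Icc 1 n).powersetCard k).filter
          (fun A => Finset.Icc 1 (d - 1) ⊆ A ∧ (A ∩ Finset.Icc d (k + 1)).Nonempty)) ∪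
        (Finset.Icc 1 (d - 1)).image (fun i => (Finset.Icc 1 (k + 1)).erase i))
      Afam.card ≤ Bfam.card ∧ Bfam.card ≤ Hfam.card ∧
        ((Afam.card = Bfam.card ∧ Bfam.card = Hfam.card) ↔ (k = 3 ∧ d = 2)) := by
  have hgap : ∀ᶠ n in atTop,
      (d + 1) * (n - k + (k - d)).choose (k - d) < (d + 1 + 1) * (n - k).choose (k - d) :=
    (tendsto_sub_atTop_nat k).eventually (Nat.eventually_mul_choose_add_lt _ _ _)
  have hlin : ∀ᶠ n in atTop, (d - 1) * (n - (k + 1) + 2) < (n - (k + 1)).choose (k - d) :=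
    (tendsto_sub_atTop_nat (k + 1)).eventually (Nat.eventually_mul_add_lt_choose _ _ (by omega))
  refine eventually_atTop.mp ?_
  filter_upwards [hgap, hlin, eventually_ge_atTop (k + 1)] with n hgap hlin hkn
  intro Afam Bfam Hfam
  have hAB : #Afam < #Bfam := calc
    #Afam ≤ (d + 1) * (n - d).choose (k - d) := card_familyA_le (by omega) (by omega)
    _ < (d + 2) * (n - k).choose (k - d) := by rwa [show n - k + (k - d) = n - d by omega] at hgap
    _ ≤ (k - d + 1) * (n - k).choose (k - d) := Nat.mul_le_mul_right _ (by omega)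
    _ ≤ #(familyB₂ n k d) := le_card_familyB₂ (by omega) (by omega) (by omega)
    _ ≤ #Bfam := card_le_card subset_union_right
  have hBH : #Bfam < #Hfam := calc
    #Bfam ≤ #(familyB₁ n k d) + #(familyB₂ n k d) := card_union_le _ _
    _ ≤ (d - 1) * (n - k + 1) + #(familyB₂ n k d) :=
      Nat.add_le_add_right (card_familyB₁_le hd (by omega) (by omega)) _
    _ < (n - (k + 1)).choose (k - d) + #(familyB₂ n k d) := by
      rw [show n - k + 1 = n - (k + 1) + 2 by omega]
      exact Nat.add_lt_add_right hlin _
    _ ≤ #(familyH₁ n k d) := by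
      rw [add_comm]
      exact card_familyB₂_add_le (by omega) (by omega) hkn
    _ ≤ #Hfam := card_le_card subset_union_left
  exact ⟨hAB.le, hBH.le, iff_of_false (fun h => hAB.ne h.1) (by omega)⟩

theorem A_le_B_le_H (k d : ℕ) (hd : 2 ≤ d) (hdk : d < k) (h2d : 2 * d < k) :
    ∃ N : ℕ, ∀ n ≥ N,
      let Afam := (((Finset.Icc 1 n).powersetCard k).filter
        (fun A => d ≤ (A ∩ Finset.Icc 1 (d + 1)).card))
      let Bfam := ((((Finset.Icc 1 n).powersetCard k).filter
          (fun B => (B ∩ Finset.Icc 1 (d - 1)).card = d - 2 ∧ Finset.Icc d k ⊆ B)) ∪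
        (((Finset.Icc 1 n).powersetCard k).filter
          (fun B => Finset.Icc 1 (d - 1) ⊆ B ∧ (B ∩ Finset.Icc d k).Nonempty)))
      let Hfam := ((((Finset.Icc 1 n).powersetCard k).filter
          (fun A => Finset.Icc 1 (d - 1) ⊆ A ∧ (A ∩ Finset.Icc d (k + 1)).Nonempty)) ∪
        (Finset.Icc 1 (d - 1)).image (fun i => (Finset.Icc 1 (k + 1)).erase i))
      Afam.card ≤ Bfam.card ∧ Bfam.card ≤ Hfam.card ∧
        ((Afam.card = Bfam.card ∧ Bfam.card = Hfam.card) ↔ (k = 3 ∧ d = 2)) :=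
  A_le_B_le_H_general k d hd h2d
end
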